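/- Let p be an odd prime and G = V ⋊ ⟨c⟩ the quotient of C₂ ≀ C_p by its center. In G, the element c is conjugate to wc for every w ∈ V; consequently the p−1 conjugacy classes of G outside V are permuted transitively by automorphisms of G extending the automorphisms of ⟨c⟩. -/

import Mathlib

/-- The base group of the wreath product `C₂ ≀ C_p`, written multiplicatively. -/
abbrev WreathBase (p : ℕ) := Multiplicative (ZMod p → ZMod 2)

/-- The shift automorphism of the base group, by `k`. -/
def shiftAddAut (p : ℕ) (k : ZMod p) : AddAut (ZMod p → ZMod 2) where
  toFun f i := f (i + k)
  invFun f i := f (i - k)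
  left_inv f := by funext i; simp
  right_inv f := by funext i; simp
  map_add' f g := rfl

/-- The action of `C_p` on the base group by cyclic shifts. -/
def wreathShift (p : ℕ) : Multiplicative (ZMod p) →* MulAut (WreathBase p) where
  toFun k := AddEquiv.toMultiplicative (shiftAddAut p k.toAdd)
  map_one' := by
    ext f
    simp [shiftAddAut, AddEquiv.toMultiplicative]
  map_mul' a b := by
    ext f
    simp only [shiftAddAut, AddEquiv.toMultiplicative]
    first
      | exact congrArg _ (add_assoc ..).symm
      | simp [add_assoc]
      | (simp only [MulAut.mul_apply]; exact congrArg _ (add_assoc ..).symm)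

/-- The wreath product `C₂ ≀ C_p`. -/
abbrev Wreath (p : ℕ) := WreathBase p ⋊[wreathShift p] Multiplicative (ZMod p)

/-- The quotient `G = W / Z(W)` of the wreath product by its center. -/
abbrev WreathQuot (p : ℕ) := Wreath p ⧸ Subgroup.center (Wreath p)

/-- The canonical generator `c`, the image in `G` of the generator of `C_p`. -/
def cElem (p : ℕ) : WreathQuot p :=
  QuotientGroup.mk' _ (SemidirectProduct.inr (Multiplicative.ofAdd (1 : ZMod p)))

/-- `V`, the image in `G` of the base group `C₂^p`. -/
def Vsub (p : ℕ) : Subgroup (WreathQuot p) :=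
  Subgroup.map (QuotientGroup.mk' _) (SemidirectProduct.inl (φ := wreathShift p)).range

/-!
Conjugating `x = (f, k)`, `k ≠ 0`, by a base element `e` replaces `f` by `f + e + e(· + k)`.
Writing `S` for the shift by `k`, over `𝔽₂` and for odd `p` one has
`(1 + S)(S + S³ + ⋯ + S^(p-2)) = 1 + (1 + S + ⋯ + S^(p-1))`, so every `g` is `e + e(· + k)` plus
the constant `∑ g`. Constants are central, hence in `G` all elements `(f, k)` with the same
`k ≠ 0` are conjugate. Multiplying `ℤ/p` by a unit `u` induces an automorphism of the wreath
product sending `k` to `u k`; it descends to `G` because the center is characteristic.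
-/

open Finset SemidirectProduct Multiplicative

theorem Finset.sum_range_two_mul_add_one {M : Type*} [AddCommMonoid M] (f : ℕ → M) (r : ℕ) :
    ∑ m ∈ range (2 * r + 1), f m =
      f 0 + (∑ j ∈ range r, f (2 * j + 1) + ∑ j ∈ range r, f (2 * j + 2)) := by
  induction r with
  | zero => simp
  | succ r ih =>
    rw [show 2 * (r + 1) + 1 = 2 * r + 1 + 1 + 1 by ring, sum_range_succ, sum_range_succ, ih,
      sum_range_succ, sum_range_succ]
    abel

theorem ZMod.sum_range_natCast {M : Type*} [AddCommMonoid M] (p : ℕ) [NeZero p]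
    (h : ZMod p → M) : ∑ m ∈ range p, h m = ∑ x, h x := by
  refine sum_nbij' (↑) ZMod.val (fun _ _ => mem_univ _) (fun x _ => mem_range.mpr x.val_lt)
    (fun m hm => ZMod.val_cast_of_lt (mem_range.mp hm)) (fun x _ => ZMod.natCast_zmod_val x)
    fun _ _ => rfl

theorem ZMod.sum_range_add_mul {M : Type*} [AddCommMonoid M] (p : ℕ) [NeZero p]
    {k : ZMod p} (hk : IsUnit k) (g : ZMod p → M) (i : ZMod p) :
    ∑ m ∈ range p, g (i + m * k) = ∑ x, g x := by
  rw [ZMod.sum_range_natCast p fun x => g (i + x * k)]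
  exact Fintype.sum_equiv ((Units.mulRight hk.unit).trans (Equiv.addLeft i)) _ _ fun x => rfl

theorem ZMod.exists_eq_add_shift_add_sum {R : Type*} [CommRing R] [CharP R 2] {p : ℕ} [NeZero p]
    (hodd : Odd p) {k : ZMod p} (hk : IsUnit k) (g : ZMod p → R) :
    ∃ e : ZMod p → R, ∀ i, g i = e i + e (i + k) + ∑ j, g j := by
  obtain ⟨r, hr⟩ := hodd
  refine ⟨fun i => ∑ j ∈ range r, g (i + (2 * j + 1 : ℕ) * k), fun i => ?_⟩
  have htotal := Finset.sum_range_two_mul_add_one (fun m => g (i + m * k)) r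
  rw [← hr, ZMod.sum_range_add_mul p hk] at htotal
  have hshift : ∑ j ∈ range r, g (i + k + (2 * j + 1 : ℕ) * k) =
      ∑ j ∈ range r, g (i + (2 * j + 2 : ℕ) * k) :=
    sum_congr rfl fun j _ => congrArg g (by push_cast; ring)
  simp only [Nat.cast_zero, zero_mul, add_zero] at htotal
  change g i = _ + ∑ j ∈ range r, g (i + k + (2 * j + 1 : ℕ) * k) + _
  rw [hshift, htotal]
  linear_combination (-(∑ j ∈ range r, g (i + (2 * j + 1 : ℕ) * k)) -
    ∑ j ∈ range r, g (i + (2 * j + 2 : ℕ) * k)) * CharTwo.two_eq_zero (R := R)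

variable {p : ℕ}

@[simp] theorem toAdd_wreathShift_apply (k : Multiplicative (ZMod p)) (f : WreathBase p)
    (i : ZMod p) : (wreathShift p k f).toAdd i = f.toAdd (i + k.toAdd) := rfl

theorem inl_const_mem_center (a : ZMod 2) :
    (inl (ofAdd fun _ => a) : Wreath p) ∈ Subgroup.center (Wreath p) := by
  refine Subgroup.mem_center_iff.mpr fun g => SemidirectProduct.ext ?_ (by simp)
  simp only [mul_left, left_inl, right_inl, map_one, MulAut.one_apply]
  -- shifting fixes a constant function definitionally
  exact mul_comm _ _

theorem toAdd_right_ne_zero_of_notMem_Vsub {x : Wreath p} (hx : (x : WreathQuot p) ∉ Vsub p) :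
    x.right.toAdd ≠ 0 := by
  intro h
  refine hx ⟨inl x.left, ⟨x.left, rfl⟩, congrArg _ (SemidirectProduct.ext rfl ?_)⟩
  simpa using congrArg ofAdd h.symm

theorem isConj_mk_of_right_eq (hodd : Odd p) {x y : Wreath p} (hxy : x.right = y.right)
    (hx : IsUnit x.right.toAdd) : IsConj (x : WreathQuot p) y := by
  have : NeZero p := ⟨hodd.pos.ne'⟩
  obtain ⟨e, he⟩ := ZMod.exists_eq_add_shift_add_sum hodd hx (x.left.toAdd + y.left.toAdd)
  set u : Wreath p := inl (ofAdd e)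
  have hconj : u * x * u⁻¹ = inl (ofAdd fun _ => ∑ j, (x.left.toAdd + y.left.toAdd) j) * y := by
    refine SemidirectProduct.ext ?_ (by simp [u, hxy])
    ext i
    simp only [Pi.add_apply] at he
    simp only [u, mul_left, left_inl, right_inl, map_one, MulAut.one_apply, mul_right, one_mul,
      inv_left, inv_one, map_inv, toAdd_mul, toAdd_ofAdd, toAdd_inv, Pi.add_apply, Pi.neg_apply,
      toAdd_wreathShift_apply, ZMod.neg_eq_self_mod_two]
    linear_combination he i + (e i + e (i + x.right.toAdd) - y.left.toAdd i) *
      (CharTwo.two_eq_zero : (2 : ZMod 2) = 0)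
  have := (QuotientGroup.mk' (Subgroup.center (Wreath p))).map_isConj (isConj_iff.mpr ⟨u, hconj⟩)
  simp only [map_mul, QuotientGroup.mk'_apply] at this
  rwa [(QuotientGroup.eq_one_iff _).mpr (inl_const_mem_center _), one_mul] at this

def wreathScale (u : (ZMod p)ˣ) : Wreath p ≃* Wreath p :=
  SemidirectProduct.congr
    (LinearEquiv.funCongrLeft (ZMod 2) (ZMod 2) (Units.mulLeft u⁻¹)).toAddEquiv.toMultiplicative
    (AddAut.mulLeft u).toAdd.toMultiplicative
    fun k => by
      ext f i
      change _ = f.toAdd (u⁻¹ * (i + u * k.toAdd))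
      simp [mul_add]

@[simp] theorem toAdd_wreathScale_right (u : (ZMod p)ˣ) (x : Wreath p) :
    (wreathScale u x).right.toAdd = u * x.right.toAdd := rfl

/-- For an odd prime `p` and `G = (C₂ ≀ C_p)/Z = V ⋊ ⟨c⟩`: the element `c`
is conjugate to `w·c` for every `w ∈ V`; consequently any two elements
outside `V` are related by an automorphism of `G` followed by a conjugation,
i.e. the `p - 1` conjugacy classes outside `V` are permuted transitively by
automorphisms of `G`. -/
theorem conjugacy_outside_V (p : ℕ) (hp : p.Prime) (hodd : Odd p) :
    (∀ w ∈ Vsub p, IsConj (cElem p) (w * cElem p)) ∧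
    (∀ g ∉ Vsub p, ∀ h ∉ Vsub p,
      ∃ α : MulAut (WreathQuot p), IsConj (α g) h) := by
  have : Fact p.Prime := ⟨hp⟩
  constructor
  · rintro _ ⟨_, ⟨f, rfl⟩, rfl⟩
    exact isConj_mk_of_right_eq hodd (by simp) (by simp)
  · intro g hg h hh
    obtain ⟨x, rfl⟩ := QuotientGroup.mk_surjective g
    obtain ⟨y, rfl⟩ := QuotientGroup.mk_surjective h
    have hk := toAdd_right_ne_zero_of_notMem_Vsub hg
    have hl := toAdd_right_ne_zero_of_notMem_Vsub hh
    set u := Units.mk0 _ (div_ne_zero hl hk)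
    refine ⟨QuotientGroup.congr _ _ (wreathScale u)
      (Subgroup.characteristic_iff_map_eq.mp inferInstance (wreathScale u)), ?_⟩
    have hright : (wreathScale u x).right = y.right :=
      toAdd.injective (by simp [u, div_mul_cancel₀ _ hk])
    exact isConj_mk_of_right_eq hodd hright (hright ▸ isUnit_iff_ne_zero.mpr hl)
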